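/- If w = uv is a Lyndon word (ALSW) with u, v nonempty and v the longest proper Lyndon suffix of w, then u is also a Lyndon word. -/

import Mathlib

/-!
A word is Lyndon iff it is greater than each of its proper suffixes, and the longest proper
Lyndon suffix `v` of `w` is the least of its proper suffixes. If a proper suffix `s` of `u` had
`s ≻ u`, then either `s` beats `u` at a letter, so `s ++ v ≻ w`, contradicting `w ≻ s ++ v`; or
`u = s ++ t`, and `w ≻ s ++ v` gives `t ++ v ≻ v`, contradicting the minimality of `v`.
-/

/-- The lexicographic ordering on words with the convention that a proper prefix is
greater than the word extending it (`u ≻ uv` for `v ≠ 1`): `gtLex u v` means `u ≻ v`. -/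
def gtLex {X : Type*} [LinearOrder X] : List X → List X → Prop
  | [], [] => False
  | [], _ :: _ => True
  | _ :: _, [] => False
  | a :: u, b :: v => b < a ∨ (a = b ∧ gtLex u v)

/-- `w` is an associative Lyndon–Shirshov word: `w` is nonempty and `w ≻ v ++ u` for every
factorization `w = u ++ v` into nonempty words. -/
def IsALSW {X : Type*} [LinearOrder X] (w : List X) : Prop :=
  w ≠ [] ∧ ∀ u v : List X, u ≠ [] → v ≠ [] → w = u ++ v → gtLex w (v ++ u)

theorem length_lt_of_eq_append {α : Type*} {w p s : List α} (hp : p ≠ []) (h : w = p ++ s) :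
    s.length < w.length := by
  simpa [h] using List.length_pos_iff.2 hp

theorem ne_of_eq_append {α : Type*} {w p s : List α} (hp : p ≠ []) (h : w = p ++ s) : w ≠ s :=
  ne_of_apply_ne List.length (length_lt_of_eq_append hp h).ne'

section Lyndon

variable {X : Type*} [LinearOrder X]

theorem gtLex_iff_lex {u v : List X} : gtLex u v ↔ List.Lex (· > ·) u v := by
  induction u generalizing v <;> cases v <;> simp [gtLex, List.cons_lex_cons_iff, *]

theorem gtLex_irrefl (u : List X) : ¬ gtLex u u := by
  rw [gtLex_iff_lex]
  exact List.lex_irrefl (r := (· > ·)) (fun a => lt_irrefl a) u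

theorem gtLex_asymm {u v : List X} (h : gtLex u v) : ¬ gtLex v u := by
  rw [gtLex_iff_lex] at h ⊢
  exact List.lex_asymm (fun h₁ h₂ => lt_asymm h₁ h₂) h

theorem gtLex_trans {u v w : List X} (h₁ : gtLex u v) (h₂ : gtLex v w) : gtLex u w := by
  rw [gtLex_iff_lex] at h₁ h₂ ⊢
  exact List.lex_trans (fun h₁ h₂ => lt_trans h₂ h₁) h₁ h₂

theorem gtLex_of_not_gtLex {u v : List X} (h : ¬ gtLex u v) (hne : u ≠ v) : gtLex v u := by
  rw [gtLex_iff_lex] at h ⊢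
  by_contra h'
  exact hne (Std.Trichotomous.trichotomous u v h h')

@[simp]
theorem gtLex_append_left_iff (c : List X) {u v : List X} :
    gtLex (c ++ u) (c ++ v) ↔ gtLex u v := by
  induction c <;> simp [gtLex, *]

theorem gtLex_of_append_right {p q : List X} (x : List X) (hlen : p.length = q.length)
    (h : gtLex (p ++ x) (q ++ x)) : gtLex p q := by
  induction p generalizing q with
  | nil => cases List.eq_nil_of_length_eq_zero hlen.symm; exact absurd h (gtLex_irrefl x)
  | cons a p ih =>
    obtain _ | ⟨b, q⟩ := q
    · simp at hlen
    · exact h.imp_right fun ⟨hab, h⟩ => ⟨hab, ih (by simpa using hlen) h⟩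

theorem gtLex_append_of_not_prefix {u v : List X} (h : gtLex u v) (hpre : ¬ u <+: v)
    (x y : List X) : gtLex (u ++ x) (v ++ y) := by
  induction u generalizing v with
  | nil => exact absurd (List.nil_prefix) hpre
  | cons a u ih =>
    obtain _ | ⟨b, v⟩ := v
    · exact absurd h id
    · refine h.imp_right fun ⟨hab, h⟩ => ⟨hab, ih h fun hp => hpre ?_⟩
      exact List.cons_prefix_cons.2 ⟨hab, hp⟩

/-- If `s` were `⪰ w`, it would either beat `w` at a letter, which `w ≻ s ++ p` forbids, or be
a border `w = s ++ t`, and the rotations `t ++ s` and `s ++ p` would give both `p ≻ t` and `t ≻ p`. -/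
theorem IsALSW.gtLex_of_eq_append {w p s : List X} (hw : IsALSW w) (hp : p ≠ []) (hs : s ≠ [])
    (h : w = p ++ s) : gtLex w s := by
  by_contra hws
  have hsw : gtLex s w := gtLex_of_not_gtLex hws (ne_of_eq_append hp h)
  have hrot : gtLex w (s ++ p) := hw.2 p s hp hs h
  by_cases hpre : s <+: w
  · obtain ⟨t, hst⟩ := hpre
    have ht : t ≠ [] := by
      rintro rfl
      rw [List.append_nil] at hst
      exact gtLex_irrefl s (hst ▸ hsw)
    have hpt : gtLex p t := by
      refine gtLex_of_append_right s ?_ (h ▸ hw.2 s t hs ht hst.symm)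
      have := congrArg List.length (hst.trans h)
      simp only [List.length_append] at this
      omega
    have htp : gtLex t p := by
      rwa [← hst, gtLex_append_left_iff] at hrot
    exact gtLex_asymm hpt htp
  · exact gtLex_asymm hrot (by simpa using gtLex_append_of_not_prefix hsw hpre p [])

theorem isALSW_iff_gtLex_suffix {w : List X} :
    IsALSW w ↔ w ≠ [] ∧ ∀ p s, p ≠ [] → s ≠ [] → w = p ++ s → gtLex w s := by
  refine ⟨fun hw => ⟨hw.1, fun p s hp hs h => hw.gtLex_of_eq_append hp hs h⟩,
    fun ⟨hne, hw⟩ => ⟨hne, fun p s hp hs h => ?_⟩⟩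
  have hpre : ¬ w <+: s := fun hws => (length_lt_of_eq_append hp h).not_ge hws.length_le
  simpa using gtLex_append_of_not_prefix (hw p s hp hs h) hpre [] p

/-- Unless `t = v`, `t` is longer than `v` and hence not Lyndon, so some proper suffix `s` has
`s ≻ t`; either `s` is a suffix of `v`, so `v ⪰ s`, or by induction `s ⪰ v`. -/
theorem IsALSW.not_gtLex_of_longest_suffix {v t : List X} (hv : IsALSW v) (hvt : v <:+ t)
    (hmax : ∀ s, s <:+ t → IsALSW s → s.length ≤ v.length) : ¬ gtLex t v := by
  induction hn : t.length using Nat.strong_induction_on generalizing t with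
  | _ n ih =>
    intro htv
    have htL : ¬ IsALSW t := by
      intro htL
      have := hvt.eq_of_length (le_antisymm hvt.length_le (hmax t List.suffix_rfl htL))
      exact gtLex_irrefl v (this ▸ htv)
    have htne : t ≠ [] := fun h => hv.1 (List.eq_nil_of_suffix_nil (h ▸ hvt))
    obtain ⟨p, s, hp, hs, hps, hts⟩ : ∃ p s, p ≠ [] ∧ s ≠ [] ∧ t = p ++ s ∧ ¬ gtLex t s := by
      simpa [isALSW_iff_gtLex_suffix, htne] using htL
    have hst : gtLex s t := gtLex_of_not_gtLex hts (ne_of_eq_append hp hps)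
    have hsuf : s <:+ t := ⟨p, hps.symm⟩
    rcases le_total s.length v.length with hsv | hvs
    · obtain ⟨q, hq⟩ := List.suffix_of_suffix_length_le hsuf hvt hsv
      rcases eq_or_ne q [] with rfl | hq0
      · exact gtLex_asymm htv (by simpa [← hq] using hst)
      · exact gtLex_asymm (hv.gtLex_of_eq_append hq0 hs hq.symm) (gtLex_trans hst htv)
    · exact ih s.length (hn ▸ length_lt_of_eq_append hp hps)
        (List.suffix_of_suffix_length_le hvt hsuf hvs) (fun s' hs' => hmax s' (hs'.trans hsuf))
        rfl (gtLex_trans hst htv)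

end Lyndon

theorem isALSW_of_longest_lyndon_suffix_general {X : Type*} [LinearOrder X] (w u v : List X)
    (hw : IsALSW w) (hu : u ≠ []) (heq : w = u ++ v) (hvL : IsALSW v)
    (hmax : ∀ v' : List X, v' <:+ w → v' ≠ w → IsALSW v' → v'.length ≤ v.length) :
    IsALSW u := by
  refine isALSW_iff_gtLex_suffix.2 ⟨hu, fun p s hp hs hps => ?_⟩
  by_contra hus
  have hsu : gtLex s u := gtLex_of_not_gtLex hus (ne_of_eq_append hp hps)
  have hwsv : gtLex w (s ++ v) :=
    hw.gtLex_of_eq_append hp (by simp [hs]) (by rw [heq, hps, List.append_assoc])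
  by_cases hpre : s <+: u
  · obtain ⟨t, rfl⟩ := hpre
    have hw' : w = s ++ (t ++ v) := by rw [heq, List.append_assoc]
    have htv : gtLex (t ++ v) v := by rwa [hw', gtLex_append_left_iff] at hwsv
    refine hvL.not_gtLex_of_longest_suffix (List.suffix_append t v)
      (fun s' hs' hL => hmax s' (hs'.trans ⟨s, hw'.symm⟩) ?_ hL) htv
    exact ne_of_apply_ne List.length (hs'.length_le.trans_lt (length_lt_of_eq_append hs hw')).ne
  · exact gtLex_asymm hwsv (by simpa [heq] using gtLex_append_of_not_prefix hsu hpre v v)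

/-- If `w = u ++ v` is an ALSW with `u, v` nonempty and `v` the longest proper Lyndon
suffix of `w`, then `u` is an ALSW as well. -/
theorem isALSW_of_longest_lyndon_suffix {X : Type*} [LinearOrder X] (w u v : List X)
    (hw : IsALSW w) (hu : u ≠ []) (hv : v ≠ []) (heq : w = u ++ v) (hvL : IsALSW v)
    (hmax : ∀ v' : List X, v' <:+ w → v' ≠ w → IsALSW v' → v'.length ≤ v.length) :
    IsALSW u :=
  isALSW_of_longest_lyndon_suffix_general w u v hw hu heq hvL hmax
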